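/- Let A = a₀·I + a·σ, B = b₀·I + b·σ, C = c₀·I + c·σ be qubit observables with {a,b,c} linearly independent in ℝ³. Then the uncertainty region {(Δ_ρA, Δ_ρB, Δ_ρC) : ρ a qubit density matrix} ⊆ ℝ³_{≥0} equals the union over the four sign choices ε_b, ε_c ∈ {+1,−1} of the sets { (x,y,z) : x ∈ [0,|a|], y ∈ [0,|b|], z ∈ [0,|c|], and u·T_{a,b,c}⁻¹·uᵀ ≤ 1 }, where u = u_{ε_b,ε_c}(x,y,z) = (√(|a|²−x²), ε_b·√(|b|²−y²), ε_c·√(|c|²−z²)) is viewed as a row vector in ℝ³. -/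

import Mathlib

open Matrix MeasureTheory Filter Set
open scoped RealInnerProductSpace Kronecker ComplexOrder

noncomputable section

/-- ℝ³ with the Euclidean norm and inner product. -/
abbrev E3 : Type := EuclideanSpace ℝ (Fin 3)

/-- The Pauli matrices. -/
def pauli1 : Matrix (Fin 2) (Fin 2) ℂ := !![0, 1; 1, 0]
def pauli2 : Matrix (Fin 2) (Fin 2) ℂ := !![0, -Complex.I; Complex.I, 0]
def pauli3 : Matrix (Fin 2) (Fin 2) ℂ := !![1, 0; 0, -1]

/-- The qubit observable `a₀·I + a·σ`. -/
def qObs (a0 : ℝ) (a : E3) : Matrix (Fin 2) (Fin 2) ℂ :=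
  (a0 : ℂ) • (1 : Matrix (Fin 2) (Fin 2) ℂ)
    + (a 0 : ℂ) • pauli1 + (a 1 : ℂ) • pauli2 + (a 2 : ℂ) • pauli3

/-- A density matrix: positive semidefinite with trace one. -/
def IsDensityMatrix {n : Type*} [Fintype n] (ρ : Matrix n n ℂ) : Prop :=
  ρ.PosSemidef ∧ ρ.trace = 1

/-- Mean value `⟨M⟩_ρ = Tr(Mρ)` of an observable `M` in the state `ρ`. -/
def mean {n : Type*} [Fintype n] (M ρ : Matrix n n ℂ) : ℝ :=
  (Matrix.trace (M * ρ)).re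

/-- Variance `(Δ_ρ M)² = Tr(M²ρ) − (Tr(Mρ))²`. -/
def variance {n : Type*} [Fintype n] (M ρ : Matrix n n ℂ) : ℝ :=
  (Matrix.trace (M * M * ρ)).re - (mean M ρ) ^ 2

/-- Uncertainty `Δ_ρ M` (standard deviation). -/
def uncertainty {n : Type*} [Fintype n] (M ρ : Matrix n n ℂ) : ℝ :=
  Real.sqrt (variance M ρ)

/-- Gram matrix of a tuple of vectors in ℝ³. -/
def gram {m : ℕ} (v : Fin m → E3) : Matrix (Fin m) (Fin m) ℝ :=
  Matrix.of fun i j => (inner ℝ (v i) (v j) : ℝ)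

lemma gram_isHermitian {m : ℕ} (v : Fin m → E3) : (gram v).IsHermitian := by
  ext i j
  simp [_root_.gram, Matrix.conjTranspose_apply, mul_comm, real_inner_comm]

/-- Smallest eigenvalue of the Gram matrix. -/
def lamMin {m : ℕ} (v : Fin m → E3) : ℝ := ⨅ i, (gram_isHermitian v).eigenvalues i

/-- Largest eigenvalue of the Gram matrix. -/
def lamMax {m : ℕ} (v : Fin m → E3) : ℝ := ⨆ i, (gram_isHermitian v).eigenvalues i

/-!
A qubit state is `ρ = (I + r·σ)/2` with Bloch vector `‖r‖ ≤ 1`, and in that state the observable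
`a₀ I + a·σ` has variance `‖a‖² - ⟪a, r⟫²`. So the region is the image of the unit ball under
`r ↦ (√(‖a‖² - ⟪a, r⟫²), √(‖b‖² - ⟪b, r⟫²), √(‖c‖² - ⟪c, r⟫²))`. With `M` the (invertible) matrix
of rows `a, b, c`, the vector `t = M r` ranges over all of `ℝ³`, and `T = M Mᵀ` gives
`‖r‖² = t T⁻¹ tᵀ`. The uncertainties recover `t` up to the signs of its entries; since `r ↦ -r`
changes no uncertainty we may take `⟪a, r⟫ ≥ 0`, and then `εb`, `εc` are the signs of `⟪b, r⟫`
and `⟪c, r⟫`.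
-/

theorem Matrix.IsHermitian.posSemidef_iff_trace_nonneg_and_det_nonneg {𝕜 : Type*} [RCLike 𝕜]
    {A : Matrix (Fin 2) (Fin 2) 𝕜} (hA : A.IsHermitian) :
    A.PosSemidef ↔ 0 ≤ A.trace ∧ 0 ≤ A.det := by
  refine ⟨fun h => ⟨h.trace_nonneg, h.det_nonneg⟩, fun ⟨htr, hdet⟩ => ?_⟩
  rw [hA.trace_eq_sum_eigenvalues, Fin.sum_univ_two] at htr
  rw [hA.det_eq_prod_eigenvalues, Fin.prod_univ_two] at hdet
  norm_cast at htr hdet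
  rw [hA.posSemidef_iff_eigenvalues_nonneg, Pi.le_def, Fin.forall_fin_two, Pi.zero_apply,
    Pi.zero_apply]
  constructor <;> nlinarith

theorem Matrix.dotProduct_mul_transpose_inv_mulVec {n R : Type*} [Fintype n] [DecidableEq n]
    [CommRing R] {M : Matrix n n R} (hM : IsUnit M) (x : n → R) :
    (M *ᵥ x) ⬝ᵥ ((M * Mᵀ)⁻¹ *ᵥ (M *ᵥ x)) = x ⬝ᵥ x := by
  have hdet : IsUnit M.det := (Matrix.isUnit_iff_isUnit_det M).mp hM
  rw [Matrix.mul_inv_rev, Matrix.mulVec_mulVec, Matrix.mul_assoc,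
    Matrix.nonsing_inv_mul M hdet, Matrix.mul_one, Matrix.dotProduct_mulVec,
    ← Matrix.transpose_nonsing_inv, Matrix.vecMul_transpose, Matrix.mulVec_mulVec,
    Matrix.nonsing_inv_mul M hdet, Matrix.one_mulVec]

lemma exists_sign_mul_abs (t : ℝ) : ∃ ε : ℝ, (ε = 1 ∨ ε = -1) ∧ ε * |t| = t := by
  rcases le_total 0 t with h | h
  · exact ⟨1, Or.inl rfl, by rw [one_mul, abs_of_nonneg h]⟩
  · exact ⟨-1, Or.inr rfl, by rw [abs_of_nonpos h, neg_one_mul, neg_neg]⟩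

lemma sqrt_sq_sub_sq_mem_Icc {α : ℝ} (hα : 0 ≤ α) (t : ℝ) : √(α ^ 2 - t ^ 2) ∈ Icc 0 α :=
  ⟨Real.sqrt_nonneg _, (Real.sqrt_le_left hα).2 (by nlinarith [sq_nonneg t])⟩

lemma sqrt_sq_sub_sq_sqrt_sq_sub_sq {α t : ℝ} (h : t ^ 2 ≤ α ^ 2) :
    √(α ^ 2 - √(α ^ 2 - t ^ 2) ^ 2) = |t| := by
  rw [Real.sq_sqrt (sub_nonneg.2 h), sub_sub_cancel, Real.sqrt_sq_eq_abs]

lemma sqrt_sq_sub_sq_sign_mul_sqrt {α x ε : ℝ} (hx : x ∈ Icc 0 α) (hε : ε = 1 ∨ ε = -1) :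
    √(α ^ 2 - (ε * √(α ^ 2 - x ^ 2)) ^ 2) = x := by
  rw [mul_pow, show ε ^ 2 = 1 by rcases hε with rfl | rfl <;> norm_num, one_mul,
    sqrt_sq_sub_sq_sqrt_sq_sub_sq (pow_le_pow_left₀ hx.1 hx.2 2), abs_of_nonneg hx.1]

section InnerProductSpace

variable {F : Type*} [NormedAddCommGroup F] [InnerProductSpace ℝ F]

lemma real_inner_sq_le_norm_sq {a r : F} (hr : ‖r‖ ≤ 1) : ⟪a, r⟫ ^ 2 ≤ ‖a‖ ^ 2 := by
  rw [← sq_abs]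
  gcongr
  exact (abs_real_inner_le_norm a r).trans (mul_le_of_le_one_right (norm_nonneg a) hr)

lemma exists_norm_eq_inner_nonneg (a r : F) :
    ∃ r' : F, ‖r'‖ = ‖r‖ ∧ 0 ≤ ⟪a, r'⟫ ∧ ∀ v : F, ⟪v, r'⟫ ^ 2 = ⟪v, r⟫ ^ 2 := by
  rcases le_total 0 ⟪a, r⟫ with h | h
  · exact ⟨r, rfl, h, fun _ => rfl⟩
  · exact ⟨-r, norm_neg r, by rwa [inner_neg_right, neg_nonneg],
      fun v => by rw [inner_neg_right, neg_sq]⟩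

end InnerProductSpace

lemma E3.inner_eq (a r : E3) : ⟪a, r⟫ = a 0 * r 0 + a 1 * r 1 + a 2 * r 2 := by
  simp [PiLp.inner_apply, Fin.sum_univ_three, mul_comm]

open Complex in
lemma qObs_eq (a0 : ℝ) (a : E3) :
    qObs a0 a = !![(a0 + a 2 : ℂ), a 0 - a 1 * I; a 0 + a 1 * I, a0 - a 2] := by
  rw [qObs, pauli1, pauli2, pauli3, Matrix.one_fin_two]
  ext i j
  fin_cases i <;> fin_cases j <;> simp [sub_eq_add_neg]

def blochState (r : E3) : Matrix (Fin 2) (Fin 2) ℂ := (1 / 2 : ℂ) • qObs 1 r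

lemma blochState_isHermitian (r : E3) : (blochState r).IsHermitian := by
  ext i j
  fin_cases i <;> fin_cases j <;> simp [blochState, qObs_eq, Complex.ext_iff]

lemma trace_blochState (r : E3) : (blochState r).trace = 1 := by
  rw [blochState, Matrix.trace_smul, qObs_eq, Matrix.trace_fin_two_of]
  push_cast
  ring

lemma det_blochState (r : E3) : (blochState r).det = ((1 - ‖r‖ ^ 2) / 4 : ℝ) := by
  rw [blochState, Matrix.det_smul, qObs_eq, Matrix.det_fin_two_of,
    EuclideanSpace.real_norm_sq_eq, Fin.sum_univ_three, Fintype.card_fin]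
  push_cast
  linear_combination (r 1 ^ 2 / 4 : ℂ) * Complex.I_sq

lemma isDensityMatrix_blochState_iff (r : E3) : IsDensityMatrix (blochState r) ↔ ‖r‖ ≤ 1 := by
  rw [IsDensityMatrix, (blochState_isHermitian r).posSemidef_iff_trace_nonneg_and_det_nonneg,
    trace_blochState, det_blochState]
  simp only [zero_le_one, true_and, and_true, Complex.zero_le_real]
  constructor <;> intro h <;> nlinarith [norm_nonneg r]

lemma Matrix.IsHermitian.exists_blochState {ρ : Matrix (Fin 2) (Fin 2) ℂ} (hρ : ρ.IsHermitian)
    (htr : ρ.trace = 1) : ∃ r : E3, ρ = blochState r := by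
  refine ⟨!₂[2 * (ρ 1 0).re, 2 * (ρ 1 0).im, (ρ 0 0).re - (ρ 1 1).re], ?_⟩
  have hre : (ρ 0 0).re + (ρ 1 1).re = 1 := by
    simpa [Matrix.trace_fin_two] using congrArg Complex.re htr
  have h00 := hρ.apply 0 0
  have h01 := hρ.apply 0 1
  have h11 := hρ.apply 1 1
  ext i j
  fin_cases i <;> fin_cases j <;>
    simp [blochState, qObs_eq, Complex.ext_iff] at h00 h01 h11 ⊢ <;> constructor <;> linarith

lemma exists_isDensityMatrix_iff {P : Matrix (Fin 2) (Fin 2) ℂ → Prop} :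
    (∃ ρ, IsDensityMatrix ρ ∧ P ρ) ↔ ∃ r : E3, ‖r‖ ≤ 1 ∧ P (blochState r) := by
  constructor
  · rintro ⟨ρ, hρ, hP⟩
    obtain ⟨r, rfl⟩ := hρ.1.isHermitian.exists_blochState hρ.2
    exact ⟨r, (isDensityMatrix_blochState_iff r).1 hρ, hP⟩
  · rintro ⟨r, hr, hP⟩
    exact ⟨_, (isDensityMatrix_blochState_iff r).2 hr, hP⟩

lemma trace_qObs_mul_blochState (a0 : ℝ) (a r : E3) :
    (qObs a0 a * blochState r).trace = (a0 + ⟪a, r⟫ : ℝ) := by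
  rw [blochState, Matrix.mul_smul, Matrix.trace_smul, qObs_eq, qObs_eq, Matrix.mul_fin_two,
    Matrix.trace_fin_two_of, E3.inner_eq]
  push_cast
  linear_combination (-(a 1 * r 1) : ℂ) * Complex.I_sq

lemma trace_qObs_mul_qObs_mul_blochState (a0 : ℝ) (a r : E3) :
    (qObs a0 a * qObs a0 a * blochState r).trace = (a0 ^ 2 + ‖a‖ ^ 2 + 2 * a0 * ⟪a, r⟫ : ℝ) := by
  rw [blochState, Matrix.mul_smul, Matrix.trace_smul, qObs_eq, qObs_eq, Matrix.mul_fin_two,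
    Matrix.mul_fin_two, Matrix.trace_fin_two_of, E3.inner_eq, EuclideanSpace.real_norm_sq_eq,
    Fin.sum_univ_three]
  push_cast
  linear_combination (-(2 * a0 * a 1 * r 1 + a 1 ^ 2) : ℂ) * Complex.I_sq

lemma variance_qObs_blochState (a0 : ℝ) (a r : E3) :
    variance (qObs a0 a) (blochState r) = ‖a‖ ^ 2 - ⟪a, r⟫ ^ 2 := by
  rw [variance, mean, trace_qObs_mul_qObs_mul_blochState, trace_qObs_mul_blochState,
    Complex.ofReal_re, Complex.ofReal_re]
  ring

lemma uncertainty_qObs_blochState (a0 : ℝ) (a r : E3) :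
    uncertainty (qObs a0 a) (blochState r) = √(‖a‖ ^ 2 - ⟪a, r⟫ ^ 2) := by
  rw [uncertainty, variance_qObs_blochState]

def rowMatrix {m : ℕ} (v : Fin m → E3) : Matrix (Fin m) (Fin 3) ℝ := Matrix.of fun i => v i

lemma rowMatrix_mulVec {m : ℕ} (v : Fin m → E3) (r : E3) :
    rowMatrix v *ᵥ r = fun i => ⟪v i, r⟫ := by
  ext i
  simp [rowMatrix, Matrix.mulVec, EuclideanSpace.inner_eq_star_dotProduct, dotProduct_comm]

lemma gram_eq_rowMatrix_mul_transpose {m : ℕ} (v : Fin m → E3) :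
    gram v = rowMatrix v * (rowMatrix v)ᵀ := by
  ext i j
  simp [_root_.gram, rowMatrix, Matrix.mul_apply, EuclideanSpace.inner_eq_star_dotProduct,
    dotProduct, mul_comm]

lemma isUnit_rowMatrix {v : Fin 3 → E3} (hv : LinearIndependent ℝ v) : IsUnit (rowMatrix v) := by
  rw [← Matrix.linearIndependent_rows_iff_isUnit]
  exact hv.map' (WithLp.linearEquiv 2 ℝ (Fin 3 → ℝ)).toLinearMap (LinearEquiv.ker _)

lemma dotProduct_gram_inv_mulVec_inner {v : Fin 3 → E3} (hv : LinearIndependent ℝ v) (r : E3) :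
    (fun i => ⟪v i, r⟫) ⬝ᵥ ((gram v)⁻¹ *ᵥ fun i => ⟪v i, r⟫) = ‖r‖ ^ 2 := by
  rw [← rowMatrix_mulVec, gram_eq_rowMatrix_mul_transpose,
    Matrix.dotProduct_mul_transpose_inv_mulVec (isUnit_rowMatrix hv),
    EuclideanSpace.real_norm_sq_eq]
  simp [dotProduct, sq]

lemma exists_inner_eq {v : Fin 3 → E3} (hv : LinearIndependent ℝ v) (t : Fin 3 → ℝ) :
    ∃ r : E3, (fun i => ⟪v i, r⟫) = t := by
  have hdet := (Matrix.isUnit_iff_isUnit_det _).mp (isUnit_rowMatrix hv)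
  refine ⟨WithLp.toLp 2 ((rowMatrix v)⁻¹ *ᵥ t), ?_⟩
  rw [← rowMatrix_mulVec, WithLp.ofLp_toLp, Matrix.mulVec_mulVec, Matrix.mul_nonsing_inv _ hdet,
    Matrix.one_mulVec]

/-- the uncertainty region of a triple of qubit observables with linearly
independent Bloch vectors. -/
theorem uncertainty_region_three_observables
    (a0 b0 c0 : ℝ) (a b c : E3) (habc : LinearIndependent ℝ ![a, b, c]) :
    {p : ℝ × ℝ × ℝ | ∃ ρ : Matrix (Fin 2) (Fin 2) ℂ, IsDensityMatrix ρ ∧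
        p = (uncertainty (qObs a0 a) ρ, uncertainty (qObs b0 b) ρ,
              uncertainty (qObs c0 c) ρ)} =
    {p : ℝ × ℝ × ℝ | ∃ εb εc : ℝ, (εb = 1 ∨ εb = -1) ∧ (εc = 1 ∨ εc = -1) ∧
        p.1 ∈ Set.Icc 0 ‖a‖ ∧ p.2.1 ∈ Set.Icc 0 ‖b‖ ∧ p.2.2 ∈ Set.Icc 0 ‖c‖ ∧
        ![Real.sqrt (‖a‖ ^ 2 - p.1 ^ 2), εb * Real.sqrt (‖b‖ ^ 2 - p.2.1 ^ 2),
            εc * Real.sqrt (‖c‖ ^ 2 - p.2.2 ^ 2)] ⬝ᵥ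
          ((gram ![a, b, c])⁻¹ *ᵥ
            ![Real.sqrt (‖a‖ ^ 2 - p.1 ^ 2), εb * Real.sqrt (‖b‖ ^ 2 - p.2.1 ^ 2),
              εc * Real.sqrt (‖c‖ ^ 2 - p.2.2 ^ 2)]) ≤ 1} := by
  have inner_vec : ∀ r : E3, (fun i => ⟪![a, b, c] i, r⟫) = ![⟪a, r⟫, ⟪b, r⟫, ⟪c, r⟫] :=
    fun r => by ext i; fin_cases i <;> rfl
  ext ⟨x, y, z⟩
  simp only [mem_ofPred_eq, exists_isDensityMatrix_iff, uncertainty_qObs_blochState]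
  constructor
  · rintro ⟨r₀, hr₀, h⟩
    obtain ⟨r, hr, ha, hsq⟩ := exists_norm_eq_inner_nonneg a r₀
    obtain ⟨εb, hεb, hb⟩ := exists_sign_mul_abs ⟪b, r⟫
    obtain ⟨εc, hεc, hc⟩ := exists_sign_mul_abs ⟪c, r⟫
    rw [← hr] at hr₀
    simp only [← hsq, Prod.mk.injEq] at h
    obtain ⟨rfl, rfl, rfl⟩ := h
    refine ⟨εb, εc, hεb, hεc, sqrt_sq_sub_sq_mem_Icc (norm_nonneg a) _,
      sqrt_sq_sub_sq_mem_Icc (norm_nonneg b) _, sqrt_sq_sub_sq_mem_Icc (norm_nonneg c) _, ?_⟩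
    simp only [sqrt_sq_sub_sq_sqrt_sq_sub_sq (real_inner_sq_le_norm_sq hr₀), abs_of_nonneg ha, hb,
      hc]
    rw [← inner_vec, dotProduct_gram_inv_mulVec_inner habc]
    exact pow_le_one₀ (norm_nonneg r) hr₀
  · rintro ⟨εb, εc, hεb, hεc, hx, hy, hz, hq⟩
    obtain ⟨r, hr⟩ := exists_inner_eq habc
      ![√(‖a‖ ^ 2 - x ^ 2), εb * √(‖b‖ ^ 2 - y ^ 2), εc * √(‖c‖ ^ 2 - z ^ 2)]
    rw [← hr, dotProduct_gram_inv_mulVec_inner habc] at hq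
    rw [inner_vec, Matrix.vecCons_inj, Matrix.vecCons_inj, Matrix.vecCons_inj] at hr
    obtain ⟨ha, hb, hc, -⟩ := hr
    refine ⟨r, (sq_le_one_iff₀ (norm_nonneg r)).1 hq, ?_⟩
    rw [ha, hb, hc, sqrt_sq_sub_sq_sign_mul_sqrt hy hεb, sqrt_sq_sub_sq_sign_mul_sqrt hz hεc,
      sqrt_sq_sub_sq_sqrt_sq_sub_sq (pow_le_pow_left₀ hx.1 hx.2 2), abs_of_nonneg hx.1]

end
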